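/- arXiv:math/0702750 — 2 statements merged into one kernel-verified Lean document; each statement's English description precedes it below -/
import Mathlib

section
/- For λ in the Garding cone Γ_m, all the lower-order elementary symmetric polynomials are positive: S_j(λ) > 0 for every j with 1 ≤ j ≤ m. -/
/-- The `m`-th elementary symmetric polynomial of `l : Fin n → ℝ`. -/
noncomputable def esymm (n m : ℕ) (l : Fin n → ℝ) : ℝ :=
  ∑ s ∈ Finset.univ.powersetCard m, ∏ i ∈ s, l i

/-- The Garding cone `Γ_m`: the connected component of `{λ | S_m(λ) > 0}`
containing the positive cone (equivalently, containing the all-ones vector). -/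
noncomputable def GardingCone (n m : ℕ) : Set (Fin n → ℝ) :=
  connectedComponentIn {l | 0 < esymm n m l} (fun _ => 1)

/-! The set `A` of `λ` with `S_j(λ) > 0` for all `j ≤ m` is open and contains the all-ones vector,
so by connectedness of `Γ_m` it suffices that `A` is relatively closed in `Γ_m`. A limit point `λ`
of `A` in `Γ_m` has `S_j(λ) ≥ 0` for `j ≤ m` and `S_m(λ) > 0`. Differentiating `∏ (X + λ_i)`
`n - m` times gives a polynomial of degree `m` which is real-rooted by Rolle's theorem and whose
coefficients are positive multiples of `S_m(λ), …, S_0(λ)`. Nonnegative coefficients and a positive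
constant term force all roots to be negative, and then Vieta's formulas make every coefficient,
hence every `S_j(λ)`, positive. -/

section OrderedSemiring

variable {R : Type*} [CommSemiring R] [PartialOrder R] [IsStrictOrderedRing R]

theorem Multiset.esymm_pos {s : Multiset R} (hs : ∀ a ∈ s, 0 < a) {k : ℕ} (hk : k ≤ card s) :
    0 < s.esymm k := by
  have hne : powersetCard k s ≠ 0 := fun h0 =>
    (Nat.choose_pos hk).ne' (by simpa [h0] using (card_powersetCard k s).symm)
  obtain ⟨t, ht⟩ := exists_mem_of_ne_zero hne
  have hprod : ∀ u ∈ powersetCard k s, 0 < u.prod := fun u hu =>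
    prod_pos fun a ha => hs a (mem_of_le (mem_powersetCard.mp hu).1 ha)
  calc 0 < t.prod := hprod t ht
    _ ≤ s.esymm k := single_le_sum (fun x hx => by
        obtain ⟨u, hu, rfl⟩ := mem_map.mp hx
        exact (hprod u hu).le) _
      (mem_map_of_mem _ ht)

open Polynomial in
theorem Polynomial.eval_pos_of_coeff_nonneg {p : R[X]} (h : ∀ i, 0 ≤ p.coeff i)
    (h0 : 0 < p.coeff 0) {x : R} (hx : 0 ≤ x) : 0 < p.eval x := by
  rw [eval_eq_sum_range, Finset.sum_range_succ']
  exact add_pos_of_nonneg_of_pos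
    (Finset.sum_nonneg fun i _ => mul_nonneg (h _) (pow_nonneg hx _)) (by simpa using h0)

end OrderedSemiring

namespace Polynomial

theorem Splits.derivative {p : ℝ[X]} (hp : p.Splits) : p.derivative.Splits := by
  rw [splits_iff_card_roots] at hp ⊢
  have h1 := card_roots_le_derivative p
  have h2 := card_roots' p.derivative
  have h3 := natDegree_derivative_le p
  omega

theorem Splits.iterate_derivative {p : ℝ[X]} (hp : p.Splits) (k : ℕ) :
    (Polynomial.derivative^[k] p).Splits := by
  induction k with
  | zero => exact hp
  | succ k ih => simpa only [Function.iterate_succ_apply'] using ih.derivative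

theorem coeff_pos_of_splits_of_roots_neg {K : Type*} [Field K] [LinearOrder K]
    [IsStrictOrderedRing K] {p : K[X]} (hp : p.Splits) (hlc : 0 < p.leadingCoeff)
    (hroots : ∀ r ∈ p.roots, r < 0) {k : ℕ} (hk : k ≤ p.natDegree) : 0 < p.coeff k := by
  rw [coeff_eq_esymm_roots_of_splits hp hk, mul_assoc, ← Multiset.esymm_neg]
  refine mul_pos hlc (Multiset.esymm_pos ?_ ?_)
  · intro a ha
    obtain ⟨r, hr, rfl⟩ := Multiset.mem_map.mp ha
    exact neg_pos.mpr (hroots r hr)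
  · rw [Multiset.card_map, hp.natDegree_eq_card_roots]; omega

theorem coeff_pos_of_splits_of_coeff_nonneg {K : Type*} [Field K] [LinearOrder K]
    [IsStrictOrderedRing K] {p : K[X]} (hp : p.Splits) (h : ∀ i, 0 ≤ p.coeff i)
    (h0 : 0 < p.coeff 0) {k : ℕ} (hk : k ≤ p.natDegree) : 0 < p.coeff k := by
  have hp0 : p ≠ 0 := fun hp0 => by simp [hp0] at h0
  refine coeff_pos_of_splits_of_roots_neg hp ?_ (fun r hr => ?_) hk
  · exact (h _).lt_of_ne' (leadingCoeff_ne_zero.mpr hp0)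
  · by_contra! hr0
    exact (eval_pos_of_coeff_nonneg h h0 hr0).ne' ((mem_roots hp0).mp hr)

end Polynomial

open Polynomial in
theorem Multiset.esymm_pos_of_esymm_nonneg {s : Multiset ℝ} {m : ℕ} (hm : m ≤ card s)
    (hnn : ∀ j ≤ m, 0 ≤ s.esymm j) (hpos : 0 < s.esymm m) {j : ℕ} (hj : j ≤ m) :
    0 < s.esymm j := by
  set n := card s
  set Q : ℝ[X] := (s.map fun r => X + C r).prod
  set P : ℝ[X] := derivative^[n - m] Q
  have hQdeg : Q.natDegree ≤ n :=
    (natDegree_multiset_prod_le _).trans (by simp [n])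
  have hcoeff : ∀ d ≤ m, P.coeff d = (d + (n - m)).descFactorial (n - m) * s.esymm (m - d) := by
    intro d hd
    rw [coeff_iterate_derivative, prod_X_add_C_coeff _ (by omega), nsmul_eq_mul]
    congr 2
    omega
  have hcoeff_high : ∀ d, m < d → P.coeff d = 0 := fun d hd => by
    rw [coeff_iterate_derivative, coeff_eq_zero_of_natDegree_lt (by omega), smul_zero]
  have hfac : ∀ d, (0 : ℝ) < (d + (n - m)).descFactorial (n - m) := fun d => by
    exact_mod_cast Nat.descFactorial_pos.mpr (by omega)
  have hP_nonneg : ∀ i, 0 ≤ P.coeff i := fun i => by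
    rcases le_or_gt i m with hi | hi
    · exact hcoeff i hi ▸ mul_nonneg (hfac i).le (hnn _ (by omega))
    · exact (hcoeff_high i hi).ge
  have hP_zero : 0 < P.coeff 0 := by
    simpa only [hcoeff 0 m.zero_le, Nat.sub_zero] using mul_pos (hfac 0) hpos
  have hPdeg : m ≤ P.natDegree := le_natDegree_of_ne_zero <| by
    simp [hcoeff m le_rfl, Multiset.esymm, (hfac m).ne']
  have hP_splits : P.Splits :=
    (Splits.multisetProd (by simp [Splits.X_add_C])).iterate_derivative _
  have h := coeff_pos_of_splits_of_coeff_nonneg hP_splits hP_nonneg hP_zero (k := m - j) (by omega)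
  rw [hcoeff (m - j) (by omega), Nat.sub_sub_self hj] at h
  exact pos_of_mul_pos_right h (hfac _).le

theorem esymm_eq_multiset_esymm (n j : ℕ) (l : Fin n → ℝ) :
    esymm n j l = (Finset.univ.val.map l).esymm j :=
  (Finset.esymm_map_val l _ j).symm

theorem esymm_pos_of_esymm_nonneg {n m : ℕ} (hmn : m ≤ n) {l : Fin n → ℝ}
    (hnn : ∀ j ≤ m, 0 ≤ esymm n j l) (hpos : 0 < esymm n m l) {j : ℕ} (hj : j ≤ m) :
    0 < esymm n j l := by
  simp only [esymm_eq_multiset_esymm] at hnn hpos ⊢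
  exact Multiset.esymm_pos_of_esymm_nonneg (by simpa using hmn) hnn hpos hj

theorem continuous_esymm (n j : ℕ) : Continuous (esymm n j) := by
  unfold esymm
  fun_prop

theorem esymm_one (n j : ℕ) : esymm n j (fun _ => 1) = n.choose j := by
  simp [esymm, Finset.card_powersetCard]

theorem stmt2_general (n m : ℕ) (hmn : m ≤ n)
    (l : Fin n → ℝ) (hl : l ∈ GardingCone n m) :
    ∀ j : ℕ, 1 ≤ j → j ≤ m → 0 < esymm n j l := by
  set A : Set (Fin n → ℝ) := {x | ∀ j ≤ m, 0 < esymm n j x}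
  have hA_open : IsOpen A := by
    simp only [A, Set.ofPred_forall]
    exact (Set.finite_Iic m).isOpen_biInter fun j _ =>
      isOpen_lt continuous_const (continuous_esymm n j)
  have one_mem_A : (fun _ => 1) ∈ A := fun j hj => by
    rw [esymm_one]
    exact_mod_cast Nat.choose_pos (hj.trans hmn)
  have hΓ_sub : GardingCone n m ⊆ A := by
    refine isPreconnected_connectedComponentIn.subset_of_closure_inter_subset hA_open
      ⟨_, mem_connectedComponentIn (one_mem_A m le_rfl), one_mem_A⟩ ?_
    rintro x ⟨hx_cl, hx_Γ⟩
    refine fun j hj => esymm_pos_of_esymm_nonneg hmn (fun i hi => ?_)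
      (connectedComponentIn_subset _ _ hx_Γ :) hj
    exact closure_lt_subset_le continuous_const (continuous_esymm n i)
      (closure_mono (fun y (hy : y ∈ A) => hy i hi) hx_cl)
  exact fun j _ hj => hΓ_sub hl j hj

theorem stmt2 (n m : ℕ) (hm : 1 ≤ m) (hmn : m ≤ n)
    (l : Fin n → ℝ) (hl : l ∈ GardingCone n m) :
    ∀ j : ℕ, 1 ≤ j → j ≤ m → 0 < esymm n j l :=
  stmt2_general n m hmn l hl
end

section
/- For λ in the Garding cone Γ_m, the partial derivative ∂S_m/∂λ_i is strictly positive for every i = 1,...,n. -/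
open Finset

section Algebra

variable {ι R : Type*} [CommSemiring R]

def esymmOn (A : Finset ι) (k : ℕ) (l : ι → R) : R :=
  ∑ s ∈ A.powersetCard k, ∏ i ∈ s, l i

@[simp]
lemma esymmOn_zero (A : Finset ι) (l : ι → R) : esymmOn A 0 l = 1 := by
  simp [esymmOn]

@[simp]
lemma esymmOn_empty_succ (k : ℕ) (l : ι → R) : esymmOn ∅ (k + 1) l = 0 := by
  rw [esymmOn, powersetCard_eq_empty.2 (by simp), sum_empty]

lemma esymmOn_one (A : Finset ι) (l : ι → R) : esymmOn A 1 l = ∑ i ∈ A, l i := by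
  simp [esymmOn, powersetCard_one]

lemma esymmOn_congr {A : Finset ι} {l l' : ι → R} (h : ∀ i ∈ A, l i = l' i) (k : ℕ) :
    esymmOn A k l = esymmOn A k l' :=
  sum_congr rfl fun _ hs => prod_congr rfl fun i hi => h i ((mem_powersetCard.1 hs).1 hi)

lemma esymmOn_const_one (A : Finset ι) (k : ℕ) :
    esymmOn A k (fun _ => (1 : R)) = (#A).choose k := by
  simp [esymmOn, card_powersetCard]

variable [DecidableEq ι]

lemma esymmOn_insert {A : Finset ι} {i : ι} (hi : i ∉ A) (k : ℕ) (l : ι → R) :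
    esymmOn (insert i A) (k + 1) l = esymmOn A (k + 1) l + l i * esymmOn A k l := by
  simp only [esymmOn, ← Finset.esymm_map_val, insert_val_of_notMem hi, Multiset.map_cons,
    Multiset.esymm, Multiset.powersetCard_cons, Multiset.map_add, Multiset.sum_add,
    Multiset.map_map, Function.comp_def, Multiset.prod_cons, Multiset.sum_map_mul_left]

lemma esymmOn_of_mem {A : Finset ι} {i : ι} (hi : i ∈ A) (k : ℕ) (l : ι → R) :
    esymmOn A (k + 1) l = esymmOn (A.erase i) (k + 1) l + l i * esymmOn (A.erase i) k l := by
  rw [← esymmOn_insert (notMem_erase i A), insert_erase hi]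

lemma sum_mul_esymmOn_erase (A : Finset ι) (k : ℕ) (l : ι → R) :
    ∑ j ∈ A, l j * esymmOn (A.erase j) k l = (k + 1) * esymmOn A (k + 1) l := by
  induction A using Finset.induction_on generalizing k with
  | empty => simp
  | insert i A hi ih =>
    have herase : ∀ j ∈ A, (insert i A).erase j = insert i (A.erase j) := fun j hj =>
      erase_insert_of_ne (ne_of_mem_of_not_mem hj hi).symm
    rw [sum_insert hi, erase_insert hi, sum_congr rfl fun j hj => by rw [herase j hj],
      esymmOn_insert hi]
    cases k with
    | zero => simp [esymmOn_one, add_comm]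
    | succ k =>
      have hsplit : ∀ j ∈ A, l j * esymmOn (insert i (A.erase j)) (k + 1) l =
          l j * esymmOn (A.erase j) (k + 1) l + l i * (l j * esymmOn (A.erase j) k l) :=
        fun j _ => by rw [esymmOn_insert fun h => hi (mem_of_mem_erase h)]; ring
      rw [sum_congr rfl hsplit, sum_add_distrib, ← mul_sum, ih, ih]
      push_cast
      ring

end Algebra

section Order

variable {ι R : Type*} [DecidableEq ι] [Field R] [LinearOrder R] [IsStrictOrderedRing R]

lemma esymmOn_pos_of_insert {A : Finset ι} {i : ι} (hi : i ∉ A) {k : ℕ} {l : ι → R}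
    (hA : 0 ≤ esymmOn A (k + 1) l) (hiA : 0 < esymmOn (insert i A) (k + 2) l)
    (hAj : ∀ j ∈ A, 0 ≤ esymmOn (A.erase j) k l) : 0 < esymmOn A (k + 1) l := by
  refine hA.lt_of_ne' fun h0 => ?_
  have hAk : 0 < esymmOn A (k + 2) l := by
    rwa [esymmOn_insert hi, h0, mul_zero, add_zero] at hiA
  have hterm : ∀ j ∈ A, l j * esymmOn (A.erase j) (k + 1) l ≤ 0 := by
    intro j hj
    have hsplit := esymmOn_of_mem hj k l
    rw [h0, eq_comm, add_eq_zero_iff_eq_neg] at hsplit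
    rw [hsplit, mul_neg, ← mul_assoc, ← sq, neg_nonpos]
    exact mul_nonneg (sq_nonneg _) (hAj j hj)
  have hsum : ((k + 1 : ℕ) + 1 : R) * esymmOn A (k + 2) l ≤ 0 :=
    sum_mul_esymmOn_erase A (k + 1) l ▸ sum_nonpos hterm
  exact (mul_pos (by positivity) hAk).not_ge hsum

variable [Fintype ι]

lemma esymmOn_compl_pos_of_nonneg {m : ℕ} {l : ι → R} (hm : 0 < esymmOn univ m l)
    (h : ∀ B : Finset ι, #B ≤ m → 0 ≤ esymmOn Bᶜ (m - #B) l) {B : Finset ι} (hB : #B ≤ m) :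
    0 < esymmOn Bᶜ (m - #B) l := by
  induction B using Finset.induction_on with
  | empty => simpa using hm
  | insert i B hi ih =>
    rw [card_insert_of_notMem hi] at hB ⊢
    rcases hB.eq_or_lt with hBm | hBm
    · simp [hBm]
    obtain ⟨k, hk⟩ := Nat.exists_eq_add_of_lt hBm
    rw [show m - (#B + 1) = k + 1 by omega]
    refine esymmOn_pos_of_insert (by simp : i ∉ (insert i B)ᶜ) ?_ ?_ fun j hj => ?_
    · simpa [card_insert_of_notMem hi, show m - (#B + 1) = k + 1 by omega] using
        h (insert i B) (by rw [card_insert_of_notMem hi]; omega)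
    · rw [insert_compl_insert hi, ← show m - #B = k + 2 by omega]
      exact ih (by omega)
    · have hj : j ∉ insert i B := mem_compl.1 hj
      have hcard : #(insert j (insert i B)) = #B + 2 := by
        rw [card_insert_of_notMem hj, card_insert_of_notMem hi]
      simpa [compl_insert, hcard, show m - (#B + 2) = k by omega] using
        h (insert j (insert i B)) (by omega)

end Order

lemma continuous_esymmOn {ι R : Type*} [CommSemiring R] [TopologicalSpace R]
    [IsTopologicalSemiring R] (A : Finset ι) (k : ℕ) : Continuous (esymmOn A k : (ι → R) → R) := by
  unfold esymmOn
  fun_prop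

section Real

variable {ι : Type*} [Fintype ι] [DecidableEq ι]

lemma fderiv_esymmOn_apply_single {A : Finset ι} {i : ι} (hi : i ∈ A) (k : ℕ) (l : ι → ℝ) :
    fderiv ℝ (esymmOn A (k + 1)) l (Pi.single i 1) = esymmOn (A.erase i) k l := by
  have hdiff : Differentiable ℝ (esymmOn A (k + 1) : (ι → ℝ) → ℝ) := by
    unfold esymmOn
    fun_prop
  have hline : ∀ t : ℝ, esymmOn A (k + 1) (l + t • Pi.single i 1) =
      esymmOn (A.erase i) (k + 1) l + (l i + t) * esymmOn (A.erase i) k l := by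
    intro t
    have hfix : ∀ j ∈ A.erase i, (l + t • Pi.single i 1 : ι → ℝ) j = l j := fun j hj => by
      simp [ne_of_mem_erase hj]
    rw [esymmOn_of_mem hi, esymmOn_congr hfix, esymmOn_congr hfix]
    simp
  rw [← hdiff.differentiableAt.lineDeriv_eq_fderiv, lineDeriv, funext hline]
  simp

def esymmComplPos (m : ℕ) : Set (ι → ℝ) :=
  {l | ∀ B : Finset ι, #B ≤ m → 0 < esymmOn Bᶜ (m - #B) l}

lemma isOpen_esymmComplPos (m : ℕ) : IsOpen (esymmComplPos (ι := ι) m) := by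
  simp only [esymmComplPos, Set.ofPred_forall]
  exact isOpen_iInter_of_finite fun B => isOpen_iInter_of_finite fun _ =>
    isOpen_lt continuous_const (continuous_esymmOn _ _)

lemma const_one_mem_esymmComplPos {m : ℕ} (hm : m ≤ Fintype.card ι) :
    (fun _ => 1) ∈ esymmComplPos (ι := ι) m := by
  intro B hB
  rw [esymmOn_const_one, card_compl]
  exact_mod_cast Nat.choose_pos (by omega)

lemma mem_esymmComplPos_of_mem_closure {m : ℕ} {l : ι → ℝ}
    (hl : l ∈ closure (esymmComplPos m)) (hm : 0 < esymmOn univ m l) : l ∈ esymmComplPos m :=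
  fun _ hB => esymmOn_compl_pos_of_nonneg hm (fun B hB => closure_minimal
    (fun _ hx => (hx B hB).le) (isClosed_le continuous_const (continuous_esymmOn _ _)) hl) hB

lemma connectedComponentIn_subset_esymmComplPos {m : ℕ} (hm : m ≤ Fintype.card ι) :
    connectedComponentIn {l : ι → ℝ | 0 < esymmOn univ m l} (fun _ => 1) ⊆ esymmComplPos m := by
  have hone := const_one_mem_esymmComplPos hm
  refine isPreconnected_connectedComponentIn.subset_of_closure_inter_subset
    (isOpen_esymmComplPos m) ⟨_, mem_connectedComponentIn ?_, hone⟩ ?_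
  · simpa using hone ∅ (Nat.zero_le m)
  · exact fun l ⟨hcl, hl⟩ =>
      mem_esymmComplPos_of_mem_closure hcl (connectedComponentIn_subset _ _ hl :)

end Real

theorem stmt3 (n m : ℕ) (hm : 1 ≤ m) (hmn : m ≤ n)
    (l : Fin n → ℝ) (hl : l ∈ GardingCone n m) (i : Fin n) :
    0 < fderiv ℝ (esymm n m) l (Pi.single i 1) := by
  obtain ⟨k, rfl⟩ := Nat.exists_eq_add_of_le' hm
  have hpos : 0 < esymmOn {i}ᶜ k l := by
    simpa using connectedComponentIn_subset_esymmComplPos (by simpa using hmn) hl {i} (by simp)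
  rw [compl_singleton] at hpos
  exact fderiv_esymmOn_apply_single (A := univ) (mem_univ i) k l ▸ hpos
end
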